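/- arXiv:2301.11374 — 2 statements merged into one kernel-verified Lean document; each statement's English description precedes it below -/
import Mathlib

section
/- Let (X, d) be a metric space, q ≥ 0 with q ≠ 1, d_E ≥ 0, L ≥ 0, and T a natural number. Let F_1, …, F_T : X → X each be Lipschitz with constant q, let ρ_0, ρ_1, …, ρ_T : X → ℝ each be Lipschitz with constant L, and let s_0, …, s_T and s'_0, …, s'_T be points of X with s'_0 = s_0, s'_i = F_i(s'_{i−1}), and d(s_i, F_i(s_{i−1})) ≤ d_E for all 1 ≤ i ≤ T. Then |∑_{i=0}^{T} ρ_i(s_i) − ∑_{i=0}^{T} ρ_i(s'_i)| ≤ L · d_E · (q^{T+1} + (1 − q)·(T + 1) − 1)/(1 − q)². -/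
private lemma carol_geom_sum_aux (q : ℝ) (T : ℕ) :
    (∑ i ∈ Finset.range (T+1), ∑ k ∈ Finset.range i, q ^ k) * (1 - q) ^ 2
      = q ^ (T + 1) + (1 - q) * (T + 1) - 1 := by
  induction T with
  | zero => simp
  | succ n ih =>
    rw [Finset.sum_range_succ, add_mul]
    have hg := geom_sum_mul q (n+1)
    push_cast
    push_cast at ih
    linear_combination ih + (q - 1) * hg


/-- Deterministic cumulative-reward deviation bound of the CAROL soundness
proof: along a trajectory deviating from `q`-Lipschitz modeled dynamics by at
most `d_E` per step, the cumulative reward (with `L`-Lipschitz per-step rewards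
`ρ_i`) differs from the reward of the exactly modeled shadow trajectory by at
most `L * d_E * (q^{T+1} + (1-q)(T+1) - 1)/(1-q)²`. -/
theorem carol_cumulative_reward_deviation
    {X : Type*} [MetricSpace X]
    (q : ℝ) (hq0 : 0 ≤ q) (hq1 : q ≠ 1)
    (dE : ℝ) (hdE : 0 ≤ dE) (L : ℝ) (hL : 0 ≤ L) (T : ℕ)
    (F : ℕ → X → X)
    (hF : ∀ i, 1 ≤ i → i ≤ T → ∀ x y, dist (F i x) (F i y) ≤ q * dist x y)
    (ρ : ℕ → X → ℝ)
    (hρ : ∀ i, i ≤ T → ∀ x y, dist (ρ i x) (ρ i y) ≤ L * dist x y)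
    (s s' : ℕ → X)
    (h0 : s' 0 = s 0)
    (hs' : ∀ i, 1 ≤ i → i ≤ T → s' i = F i (s' (i - 1)))
    (hs : ∀ i, 1 ≤ i → i ≤ T → dist (s i) (F i (s (i - 1))) ≤ dE) :
    |∑ i ∈ Finset.range (T + 1), ρ i (s i) - ∑ i ∈ Finset.range (T + 1), ρ i (s' i)|
      ≤ L * dE * (q ^ (T + 1) + (1 - q) * (T + 1) - 1) / (1 - q) ^ 2 := by
  -- per-state deviation bound
  have hdist : ∀ i, i ≤ T → dist (s i) (s' i) ≤ dE * ∑ k ∈ Finset.range i, q ^ k := by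
    intro i
    induction i with
    | zero => intro _; simp [h0]
    | succ n ih =>
      intro hn
      have hn' : n ≤ T := Nat.le_of_succ_le hn
      have h1 : 1 ≤ n + 1 := Nat.le_add_left 1 n
      have := hs' (n+1) h1 hn
      rw [this]
      calc dist (s (n+1)) (F (n+1) (s' (n+1-1)))
          ≤ dist (s (n+1)) (F (n+1) (s (n+1-1)))
            + dist (F (n+1) (s (n+1-1))) (F (n+1) (s' (n+1-1))) := dist_triangle _ _ _
        _ ≤ dE + q * dist (s n) (s' n) := by
            simp only [Nat.add_sub_cancel]
            exact add_le_add (hs (n+1) h1 hn) (hF (n+1) h1 hn _ _)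
        _ ≤ dE + q * (dE * ∑ k ∈ Finset.range n, q ^ k) := by
            have := ih hn'
            nlinarith [ih hn']
        _ = dE * ∑ k ∈ Finset.range (n+1), q ^ k := by
            rw [geom_sum_succ]; ring
  -- sum of geometric sums
  have hq1' : (1 : ℝ) - q ≠ 0 := sub_ne_zero.mpr (Ne.symm hq1)
  have hsum : ∑ i ∈ Finset.range (T+1), ∑ k ∈ Finset.range i, q ^ k
      = (q ^ (T + 1) + (1 - q) * (T + 1) - 1) / (1 - q) ^ 2 := by
    rw [eq_div_iff (pow_ne_zero 2 hq1')]
    exact carol_geom_sum_aux q T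
  -- main estimate
  calc |∑ i ∈ Finset.range (T + 1), ρ i (s i) - ∑ i ∈ Finset.range (T + 1), ρ i (s' i)|
      = |∑ i ∈ Finset.range (T + 1), (ρ i (s i) - ρ i (s' i))| := by
        rw [Finset.sum_sub_distrib]
    _ ≤ ∑ i ∈ Finset.range (T + 1), |ρ i (s i) - ρ i (s' i)| :=
        Finset.abs_sum_le_sum_abs _ _
    _ ≤ ∑ i ∈ Finset.range (T + 1), L * (dE * ∑ k ∈ Finset.range i, q ^ k) := by
        apply Finset.sum_le_sum
        intro i hi
        have hiT : i ≤ T := Nat.lt_succ_iff.mp (Finset.mem_range.mp hi)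
        calc |ρ i (s i) - ρ i (s' i)| = dist (ρ i (s i)) (ρ i (s' i)) := (Real.dist_eq _ _).symm
          _ ≤ L * dist (s i) (s' i) := hρ i hiT _ _
          _ ≤ L * (dE * ∑ k ∈ Finset.range i, q ^ k) := by
              exact mul_le_mul_of_nonneg_left (hdist i hiT) hL
    _ = L * dE * ∑ i ∈ Finset.range (T+1), ∑ k ∈ Finset.range i, q ^ k := by
        rw [Finset.mul_sum]; congr 1; ext i; ring
    _ = L * dE * (q ^ (T + 1) + (1 - q) * (T + 1) - 1) / (1 - q) ^ 2 := by
        rw [hsum]; ring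
end

section
/- Let c, e, x be real numbers with e ≥ 0 and |x − c| ≤ e. Then |max(x, 0) − (max(c + e, 0) + max(c − e, 0))/2| ≤ (max(c + e, 0) − max(c − e, 0))/2. -/
/-- Soundness of the IBP abstract transformer for ReLU: if `x` lies in the
interval with center `c` and deviation `e ≥ 0`, then `ReLU x = max x 0` lies in
the interval with center `(ReLU (c+e) + ReLU (c-e))/2` and deviation
`(ReLU (c+e) - ReLU (c-e))/2`. -/
theorem carol_ibp_relu_sound
    (c e x : ℝ) (he : 0 ≤ e) (hx : |x - c| ≤ e) :
    |max x 0 - (max (c + e) 0 + max (c - e) 0) / 2|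
      ≤ (max (c + e) 0 - max (c - e) 0) / 2 := by
  obtain ⟨h1, h2⟩ := abs_le.1 hx
  rw [abs_le]
  constructor <;> simp only [max_def] <;> split_ifs <;> linarith
end
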